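/- Let [H,G] be a Boolean interval of finite groups with dual Euler totient φ̂(H,G) = ∑_{K ∈ [H,G]} μ(H,K)·|G:K| nonzero. Then there exists an irreducible complex representation V of G such that the pointwise stabilizer of the H-fixed subspace V^H is exactly H. -/

import Mathlib

/-- The fixed-point subspace `V^H` of a representation. -/
def Representation.fixedBy {G V : Type*} [Group G] [AddCommGroup V] [Module ℂ V]
    (ρ : Representation ℂ G V) (H : Subgroup G) : Submodule ℂ V where
  carrier := {v : V | ∀ h ∈ H, ρ h v = v}
  zero_mem' := by intro h _; simp
  add_mem' := by
    intro a b ha hb h hh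
    simp [map_add, ha h hh, hb h hh]
  smul_mem' := by
    intro c a ha h hh
    simp [map_smul, ha h hh]

/-- The pointwise stabilizer `G_{(X)}` of a set of vectors. -/
def Representation.pointwiseStabilizer {G V : Type*} [Group G] [AddCommGroup V] [Module ℂ V]
    (ρ : Representation ℂ G V) (X : Set V) : Subgroup G where
  carrier := {g : G | ∀ x ∈ X, ρ g x = x}
  one_mem' := by intro x _; simp
  mul_mem' := by
    intro a b ha hb x hx
    simp [map_mul, Module.End.mul_apply, hb x hx, ha x hx]
  inv_mem' := by
    intro a ha x hx
    have h1 : ρ a⁻¹ (ρ a x) = x := by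
      rw [← Module.End.mul_apply, ← map_mul, inv_mul_cancel, map_one, Module.End.one_apply]
    calc ρ a⁻¹ x = ρ a⁻¹ (ρ a x) := by rw [ha x hx]
    _ = x := h1


/-!
For a finite-dimensional representation `V` put `χ(V) = ∑_{K ∈ [H,G]} μ(K) · dim V^K`. It is
additive on direct sums, and on the regular representation it is `φ̂(H,G)`, because
`dim ℂ[G]^K = |G:K|`. If every irreducible `W` had `L := G_{(W^H)} > H`, then `W^K = W^{K ⊔ L}`
for all `K ∈ [H,G]`, so Weisner's theorem `∑_{K ⊔ L = M} μ(K) = 0` gives `χ(W) = 0`, and by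
Maschke's theorem `χ` would vanish on `ℂ[G]` as well.
-/

universe u

open Finset Module MonoidAlgebra

section Weisner

variable {α : Type*} [Lattice α] [LocallyFiniteOrder α] [DecidableEq α] {μ : α → ℤ} {a b : α}

theorem filter_Icc_sup_eq_of_le {t z : α} (hzt : z ≤ t) :
    {x ∈ Icc b t | x ⊔ a = z} = {x ∈ Icc b z | x ⊔ a = z} := by
  ext x
  simp only [mem_filter, mem_Icc]
  constructor
  · rintro ⟨⟨hbx, -⟩, hxa⟩
    exact ⟨⟨hbx, hxa ▸ le_sup_left⟩, hxa⟩
  · rintro ⟨⟨hbx, hxz⟩, hxa⟩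
    exact ⟨⟨hbx, hxz.trans hzt⟩, hxa⟩

theorem sum_Icc_eq_sum_Icc_sum_filter_sup {M : Type*} [AddCommMonoid M] (f : α → M) {t : α}
    (hat : a ≤ t) :
    ∑ x ∈ Icc b t, f x = ∑ y ∈ Icc a t, ∑ x ∈ Icc b y with x ⊔ a = y, f x := by
  rw [← sum_fiberwise_of_maps_to (g := (· ⊔ a)) (t := Icc a t)]
  · exact sum_congr rfl fun y hy => by rw [filter_Icc_sup_eq_of_le (mem_Icc.mp hy).2]
  · exact fun x hx => mem_Icc.mpr ⟨le_sup_right, sup_le (mem_Icc.mp hx).2 hat⟩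

/-- Weisner's theorem. -/
theorem sum_Icc_filter_sup_eq_zero (hμ : ∀ c, b < c → ∑ x ∈ Icc b c, μ x = 0) (hba : b < a)
    {z : α} (haz : a ≤ z) : ∑ x ∈ Icc b z with x ⊔ a = z, μ x = 0 := by
  induction hn : #(Icc a z) using Nat.strong_induction_on generalizing z with
  | _ n ih =>
  have hsum := hμ z (hba.trans_le haz)
  rw [sum_Icc_eq_sum_Icc_sum_filter_sup μ haz, ← Ico_insert_right haz,
    sum_insert right_notMem_Ico] at hsum
  have hlower : ∑ y ∈ Ico a z, ∑ x ∈ Icc b y with x ⊔ a = y, μ x = 0 := by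
    refine sum_eq_zero fun y hy => ?_
    obtain ⟨hay, hyz⟩ := mem_Ico.mp hy
    exact ih _ (hn ▸ card_lt_card (Icc_ssubset_Icc_right haz le_rfl hyz)) hay rfl
  rwa [hlower, add_zero] at hsum

theorem sum_Icc_mul_eq_zero_of_forall_eq_sup (hμ : ∀ c, b < c → ∑ x ∈ Icc b c, μ x = 0)
    (hba : b < a) {t : α} (hat : a ≤ t) {f : α → ℤ} (hf : ∀ x ∈ Icc b t, f x = f (x ⊔ a)) :
    ∑ x ∈ Icc b t, μ x * f x = 0 := by
  rw [sum_Icc_eq_sum_Icc_sum_filter_sup _ hat]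
  refine sum_eq_zero fun y hy => ?_
  obtain ⟨hay, hyt⟩ := mem_Icc.mp hy
  calc ∑ x ∈ Icc b y with x ⊔ a = y, μ x * f x
      = ∑ x ∈ Icc b y with x ⊔ a = y, μ x * f y := by
        refine sum_congr rfl fun x hx => ?_
        obtain ⟨hx, hxa⟩ := mem_filter.mp hx
        rw [hf x (Icc_subset_Icc_right hyt hx), hxa]
    _ = (∑ x ∈ Icc b y with x ⊔ a = y, μ x) * f y := (sum_mul ..).symm
    _ = 0 := by rw [sum_Icc_filter_sup_eq_zero hμ hba hay, zero_mul]

end Weisner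

namespace Representation

variable {G : Type*} [Group G]

section FixedBy

variable {V : Type*} [AddCommGroup V] [Module ℂ V] (ρ : Representation ℂ G V)

theorem fixedBy_antitone : Antitone ρ.fixedBy :=
  fun _ _ hKL _ hv k hk => hv k (hKL hk)

theorem le_pointwiseStabilizer_iff {K : Subgroup G} {X : Set V} :
    K ≤ ρ.pointwiseStabilizer X ↔ X ⊆ ρ.fixedBy K :=
  ⟨fun h _ hx _ hk => h hk _ hx, fun h _ hk _ hx => h hx _ hk⟩

theorem fixedBy_sup (K L : Subgroup G) : ρ.fixedBy (K ⊔ L) = ρ.fixedBy K ⊓ ρ.fixedBy L := by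
  ext v
  have hmem : ∀ M : Subgroup G, v ∈ ρ.fixedBy M ↔ M ≤ ρ.pointwiseStabilizer {v} := fun M => by
    rw [le_pointwiseStabilizer_iff, Set.singleton_subset_iff, SetLike.mem_coe]
  rw [Submodule.mem_inf, hmem, hmem, hmem, sup_le_iff]

theorem fixedBy_sup_pointwiseStabilizer {H K : Subgroup G} (hHK : H ≤ K) :
    ρ.fixedBy (K ⊔ ρ.pointwiseStabilizer (ρ.fixedBy H)) = ρ.fixedBy K := by
  rw [fixedBy_sup, inf_eq_left]
  exact (ρ.fixedBy_antitone hHK).trans ((ρ.le_pointwiseStabilizer_iff).mp le_rfl)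

theorem sup_inf_fixedBy_eq_of_isCompl {p q : Submodule ℂ V} (hpq : IsCompl p q)
    (hp : ∀ g, ∀ v ∈ p, ρ g v ∈ p) (hq : ∀ g, ∀ v ∈ q, ρ g v ∈ q) (K : Subgroup G) :
    ρ.fixedBy K ⊓ p ⊔ ρ.fixedBy K ⊓ q = ρ.fixedBy K := by
  refine le_antisymm (sup_le inf_le_left inf_le_left) fun v hv => ?_
  obtain ⟨a, ha, b, hb, rfl⟩ := Submodule.mem_sup.mp (hpq.sup_eq_top ▸ Submodule.mem_top (x := v))
  have hfix : ∀ k ∈ K, ρ k a = a ∧ ρ k b = b := fun k hk => by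
    have hsum : ρ k a + ρ k b = a + b := by rw [← map_add, hv k hk]
    have hdiff : ρ k a - a = b - ρ k b := by rw [sub_eq_sub_iff_add_eq_add, hsum, add_comm]
    have hzero : ρ k a - a = 0 := Submodule.disjoint_def.mp hpq.disjoint _
      (sub_mem (hp k a ha) ha) (hdiff ▸ sub_mem hb (hq k b hb))
    rw [hzero, eq_comm, sub_eq_zero] at hdiff
    exact ⟨sub_eq_zero.mp hzero, hdiff.symm⟩
  exact Submodule.mem_sup.mpr
    ⟨a, ⟨fun k hk => (hfix k hk).1, ha⟩, b, ⟨fun k hk => (hfix k hk).2, hb⟩, rfl⟩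

theorem finrank_fixedBy_toRepresentation (σ : Subrepresentation ρ) (K : Subgroup G) :
    finrank ℂ (σ.toRepresentation.fixedBy K) = finrank ℂ ↥(ρ.fixedBy K ⊓ σ.toSubmodule) := by
  have hmap : (σ.toRepresentation.fixedBy K).map σ.toSubmodule.subtype =
      ρ.fixedBy K ⊓ σ.toSubmodule := by
    ext v
    constructor
    · rintro ⟨w, hw, rfl⟩
      exact ⟨fun k hk => congrArg Subtype.val (hw k hk), w.2⟩
    · rintro ⟨hv, hvσ⟩
      exact ⟨⟨v, hvσ⟩, fun k hk => Subtype.ext (hv k hk), rfl⟩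
  rw [← hmap, Submodule.finrank_map_subtype_eq]

theorem finrank_fixedBy_eq_add_of_isCompl [FiniteDimensional ℂ V] {σ τ : Subrepresentation ρ}
    (h : IsCompl σ τ) (K : Subgroup G) :
    finrank ℂ (ρ.fixedBy K) =
      finrank ℂ (σ.toRepresentation.fixedBy K) + finrank ℂ (τ.toRepresentation.fixedBy K) := by
  have hcompl : IsCompl σ.toSubmodule τ.toSubmodule :=
    ⟨disjoint_iff.mpr (congrArg Subrepresentation.toSubmodule h.inf_eq_bot),
      codisjoint_iff.mpr (congrArg Subrepresentation.toSubmodule h.sup_eq_top)⟩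
  have hdisj : ρ.fixedBy K ⊓ σ.toSubmodule ⊓ (ρ.fixedBy K ⊓ τ.toSubmodule) = ⊥ :=
    eq_bot_iff.mpr fun v hv => hcompl.disjoint.le_bot ⟨hv.1.2, hv.2.2⟩
  rw [finrank_fixedBy_toRepresentation, finrank_fixedBy_toRepresentation,
    ← Submodule.finrank_sup_add_finrank_inf_eq, hdisj, finrank_bot, add_zero,
    ρ.sup_inf_fixedBy_eq_of_isCompl hcompl σ.apply_mem_toSubmodule τ.apply_mem_toSubmodule]

end FixedBy

theorem finrank_fixedBy_ofMulAction {X : Type*} [MulAction G X] [Finite X] (K : Subgroup G) :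
    finrank ℂ ((ofMulAction ℂ G X).fixedBy K) = Nat.card (MulAction.orbitRel.Quotient K X) := by
  have := Fintype.ofFinite (MulAction.orbitRel.Quotient K X)
  let L : (MulAction.orbitRel.Quotient K X → ℂ) →ₗ[ℂ] ℂ[X] :=
    (coeffLinearEquiv ℂ).symm.toLinearMap ∘ₗ
      (Finsupp.linearEquivFunOnFinite ℂ ℂ X).symm.toLinearMap ∘ₗ
        LinearMap.funLeft ℂ ℂ (Quotient.mk (MulAction.orbitRel K X))
  have hL : ∀ φ x, (L φ).coeff x = φ (Quotient.mk _ x) := fun _ _ => rfl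
  have hinj : Function.Injective L := fun φ ψ h =>
    funext <| Quotient.ind fun x => congrArg (coeff · x) h
  have hrange : LinearMap.range L = (ofMulAction ℂ G X).fixedBy K := by
    ext f
    constructor
    · rintro ⟨φ, rfl⟩ k hk
      ext x
      rw [coeff_ofMulAction, hL, hL]
      exact congrArg φ (Quotient.sound ⟨⟨k, hk⟩⁻¹, rfl⟩)
    · intro hf
      refine ⟨Quotient.lift f.coeff ?_, by ext; rfl⟩
      rintro _ y ⟨k, rfl⟩
      simpa [coeff_ofMulAction, Subgroup.smul_def] using congrArg (coeff · y) (hf k⁻¹ (inv_mem k.2))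
  rw [← hrange, LinearMap.finrank_range_of_inj hinj, finrank_fintype_fun_eq_card,
    Nat.card_eq_fintype_card]

theorem finrank_fixedBy_leftRegular [Finite G] (K : Subgroup G) :
    finrank ℂ ((leftRegular ℂ G).fixedBy K) = K.index := by
  rw [finrank_fixedBy_ofMulAction, Subgroup.index_eq_card]
  exact Nat.card_congr (QuotientGroup.quotientRightRelEquivQuotientLeftRel K)

open CategoryTheory in
theorem simple_of_isIrreducible {V : Type} [AddCommGroup V] [Module ℂ V] [FiniteDimensional ℂ V]
    (ρ : Representation ℂ G V) [ρ.IsIrreducible] : Simple (FDRep.of ρ) := by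
  let F := forget₂ (FDRep ℂ G) (Rep ℂ G) ⋙ Rep.toModuleMonoidAlgebra
  have : IsSimpleModule ℂ[G] ρ.asModule := (irreducible_iff_isSimpleModule_asModule ρ).mp ‹_›
  have : Simple (F.obj (FDRep.of ρ)) := @simple_of_isSimpleModule _ _ _ _ _ this
  exact F.simple_of_simple_obj _

theorem sum_mul_finrank_fixedBy_eq_zero [Finite G] (s : Finset (Subgroup G)) (c : Subgroup G → ℤ)
    (hirr : ∀ {W : Type u} [AddCommGroup W] [Module ℂ W] [FiniteDimensional ℂ W]
      (π : Representation ℂ G W), π.IsIrreducible → ∑ K ∈ s, c K * finrank ℂ (π.fixedBy K) = 0)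
    {V : Type u} [AddCommGroup V] [Module ℂ V] [FiniteDimensional ℂ V]
    (ρ : Representation ℂ G V) : ∑ K ∈ s, c K * finrank ℂ (ρ.fixedBy K) = 0 := by
  induction hn : finrank ℂ V using Nat.strong_induction_on generalizing V with
  | _ n ih =>
  rcases subsingleton_or_nontrivial V with hV | hV
  · simp [finrank_zero_of_subsingleton]
  by_cases hsplit : ∃ σ : Subrepresentation ρ, σ ≠ ⊥ ∧ σ ≠ ⊤
  · obtain ⟨σ, hσbot, hσtop⟩ := hsplit
    obtain ⟨τ, hστ⟩ := exists_isCompl σ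
    have hτtop : τ ≠ ⊤ := fun h => hσbot (eq_bot_of_isCompl_top (h ▸ hστ))
    have hlt : ∀ σ : Subrepresentation ρ, σ ≠ ⊤ → finrank ℂ σ.toSubmodule < n := fun σ hσ =>
      hn ▸ Submodule.finrank_lt fun h => hσ (Subrepresentation.toSubmodule_injective h)
    simp_rw [ρ.finrank_fixedBy_eq_add_of_isCompl hστ, Nat.cast_add, mul_add, sum_add_distrib,
      ih _ (hlt σ hσtop) σ.toRepresentation rfl, ih _ (hlt τ hτtop) τ.toRepresentation rfl,
      add_zero]
  · refine hirr ρ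
      { exists_pair_ne := ⟨⊥, ⊤, fun h => bot_ne_top (congrArg Subrepresentation.toSubmodule h)⟩
        eq_bot_or_eq_top := fun σ => by
          by_contra! h
          exact hsplit ⟨σ, h⟩ }

end Representation

theorem linearly_primitive_of_boolean_of_dual_euler_totient_ne_zero_general
    (G : Type) [Group G] [Fintype G] (H : Subgroup G)
    (μ : Subgroup G → ℤ)
    (hμ : ∀ K : Subgroup G, H < K → ∑ᶠ L ∈ Set.Icc H K, μ L = 0)
    (hφ : ∑ᶠ K ∈ Set.Icc H (⊤ : Subgroup G), μ K * (K.index : ℤ) ≠ 0) :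
    ∃ W : FDRep ℂ G, CategoryTheory.Simple W ∧
      Representation.pointwiseStabilizer W.ρ
        (Representation.fixedBy W.ρ H : Set W) = H := by
  classical
  by_contra! hcon
  let : LocallyFiniteOrder (Subgroup G) := .ofFiniteIcc fun _ _ => Set.toFinite _
  have hμ' : ∀ K, H < K → ∑ L ∈ Icc H K, μ L = 0 := fun K hK => by
    rw [← finsum_mem_coe_finset, coe_Icc, hμ K hK]
  apply hφ
  rw [← coe_Icc, finsum_mem_coe_finset]
  simp_rw [← Representation.finrank_fixedBy_leftRegular]
  refine Representation.sum_mul_finrank_fixedBy_eq_zero _ _ (fun π hπ => ?_) _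
  have hHL : H < π.pointwiseStabilizer (π.fixedBy H) :=
    lt_of_le_of_ne ((π.le_pointwiseStabilizer_iff).mpr le_rfl)
      (hcon _ (Representation.simple_of_isIrreducible π)).symm
  exact sum_Icc_mul_eq_zero_of_forall_eq_sup hμ' hHL le_top fun K hK => by
    rw [π.fixedBy_sup_pointwiseStabilizer (mem_Icc.mp hK).1]

/-- Dual version of Ore's theorem: if `[H,G]` is a Boolean interval with nonzero dual
Euler totient `φ̂(H,G) = ∑_{K ∈ [H,G]} μ(H,K)·|G:K|`, then there is an irreducible complex
representation `V` of `G` whose `H`-fixed subspace has pointwise stabilizer exactly `H`. -/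
theorem linearly_primitive_of_boolean_of_dual_euler_totient_ne_zero
    (G : Type) [Group G] [Fintype G] (H : Subgroup G)
    (hBool : ∃ n : ℕ, Nonempty ((Set.Icc H (⊤ : Subgroup G)) ≃o Set (Fin n)))
    (μ : Subgroup G → ℤ) (hμH : μ H = 1)
    (hμ : ∀ K : Subgroup G, H < K → ∑ᶠ L ∈ Set.Icc H K, μ L = 0)
    (hφ : ∑ᶠ K ∈ Set.Icc H (⊤ : Subgroup G), μ K * (K.index : ℤ) ≠ 0) :
    ∃ W : FDRep ℂ G, CategoryTheory.Simple W ∧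
      Representation.pointwiseStabilizer W.ρ
        (Representation.fixedBy W.ρ H : Set W) = H :=
  linearly_primitive_of_boolean_of_dual_euler_totient_ne_zero_general G H μ hμ hφ
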